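/- arXiv:2202.00256 — 2 statements merged into one kernel-verified Lean document; each statement's English description precedes it below -/
import Mathlib

section
/- If the offspring distribution ν has mean m > 1, then the Galton–Watson process started from one individual survives with positive probability: P^1(τ = ∞) > 0. -/
/-!
Writing `f` for the generating function of `ν`, summing the finite-dimensional distributions over
paths gives `E[s ^ Y n] = f^[n] s`, so `P(Y k = 0 for some k ≤ n) ≤ f^[n] 0` because `0` is
absorbing. Since `f' (1-) = m > 1` there is `r < 1` with `f r ≤ r`; monotonicity of `f` keeps every
`f^[n] 0` below `r`, so the extinction probability is at most `r < 1`.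
-/

open MeasureTheory ProbabilityTheory Filter
open scoped ENNReal

noncomputable def mconv (μ ν : Measure ℕ) : Measure ℕ :=
  Measure.map (fun p : ℕ × ℕ => p.1 + p.2) (μ.prod ν)

noncomputable def convPow (ν : Measure ℕ) : ℕ → Measure ℕ
  | 0 => Measure.dirac 0
  | n + 1 => mconv (convPow ν n) ν

noncomputable def gwStep (ν : Measure ℕ) (i j : ℕ) : ℝ≥0∞ :=
  if i = 0 then (if j = 0 then 1 else 0) else convPow ν i {j}

def IsGW {Ω : Type*} [MeasurableSpace Ω] (P : Measure Ω)
    (Y : ℕ → Ω → ℕ) (ν μ0 : Measure ℕ) : Prop :=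
  Measure.map (Y 0) P = μ0 ∧
  ∀ n : ℕ, ∀ a : ℕ → ℕ,
    P {ω | ∀ k ≤ n, Y k ω = a k} =
      μ0 {a 0} * ∏ k ∈ Finset.range n, gwStep ν (a k) (a (k + 1))

open scoped Topology

noncomputable def pgf (μ : Measure ℕ) (s : ℝ≥0∞) : ℝ≥0∞ := ∑' k, μ {k} * s ^ k

lemma pgf_eq_lintegral (μ : Measure ℕ) (s : ℝ≥0∞) : pgf μ s = ∫⁻ k, s ^ k ∂μ := by
  rw [lintegral_countable']
  exact tsum_congr fun k => mul_comm _ _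

lemma pgf_mono (μ : Measure ℕ) : Monotone (pgf μ) := fun _ _ hst =>
  ENNReal.tsum_le_tsum fun k => mul_le_mul_right (pow_le_pow_left' hst k) _

lemma pgf_dirac (i : ℕ) (s : ℝ≥0∞) : pgf (Measure.dirac i) s = s ^ i := by
  rw [pgf_eq_lintegral, lintegral_dirac]

lemma pgf_mconv (μ ν : Measure ℕ) [SFinite ν] (s : ℝ≥0∞) :
    pgf (mconv μ ν) s = pgf μ s * pgf ν s := by
  simp only [pgf_eq_lintegral, mconv]
  rw [lintegral_map (measurable_of_countable _) (measurable_of_countable _)]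
  simp only [pow_add]
  exact lintegral_prod_mul (measurable_of_countable _).aemeasurable
    (measurable_of_countable _).aemeasurable

lemma pgf_convPow (ν : Measure ℕ) [SFinite ν] (i : ℕ) (s : ℝ≥0∞) :
    pgf (convPow ν i) s = pgf ν s ^ i := by
  induction i with
  | zero => rw [convPow, pgf_dirac, pow_zero, pow_zero]
  | succ i ih => rw [convPow, pgf_mconv, ih, pow_succ]

lemma tsum_gwStep_mul_pow (ν : Measure ℕ) [SFinite ν] (i : ℕ) (s : ℝ≥0∞) :
    ∑' j, gwStep ν i j * s ^ j = pgf ν s ^ i := by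
  rcases eq_or_ne i 0 with rfl | hi
  · rw [tsum_eq_single 0 fun j hj => by simp [gwStep, hj]]
    simp [gwStep]
  · simp only [gwStep, if_neg hi]
    exact pgf_convPow ν i s

lemma pow_add_one_sub_mul_le_one {r : ℝ≥0∞} (hr : r ≤ 1) (k : ℕ) :
    r ^ k + (1 - r) * (k * r ^ k) ≤ 1 := by
  induction k with
  | zero => simp
  | succ k ih =>
    calc r ^ (k + 1) + (1 - r) * ((k + 1 : ℕ) * r ^ (k + 1))
        = r * (r ^ k + (1 - r) * (k * r ^ k)) + (1 - r) * r ^ (k + 1) := by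
          push_cast; ring
      _ ≤ r * 1 + (1 - r) * 1 := by
          gcongr
          exact pow_le_one₀ zero_le hr
      _ = 1 := by rw [mul_one, mul_one, add_tsub_cancel_of_le hr]

/-- The hypothesis says `r f'(r) ≥ 1` for `f = pgf μ`. -/
lemma pgf_le_self_of_one_le_tsum (μ : Measure ℕ) [IsProbabilityMeasure μ] {r : ℝ≥0∞}
    (hr : r ≤ 1) (h : 1 ≤ ∑' k : ℕ, (k : ℝ≥0∞) * μ {k} * r ^ k) : pgf μ r ≤ r := by
  have hsum : pgf μ r + (1 - r) ≤ 1 :=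
    calc pgf μ r + (1 - r)
        ≤ pgf μ r + (1 - r) * ∑' k : ℕ, (k : ℝ≥0∞) * μ {k} * r ^ k := by
          gcongr; exact le_mul_of_one_le_right zero_le h
      _ = ∑' k, μ {k} * (r ^ k + (1 - r) * (k * r ^ k)) := by
          rw [pgf, ← ENNReal.tsum_mul_left, ← ENNReal.tsum_add]
          exact tsum_congr fun k => by ring
      _ ≤ ∑' k, μ {k} := ENNReal.tsum_le_tsum fun k =>
          mul_le_of_le_one_right zero_le (pow_add_one_sub_mul_le_one hr k)
      _ = 1 := by simpa [pgf] using pgf_eq_lintegral μ 1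
  calc pgf μ r ≤ 1 - (1 - r) := ENNReal.le_sub_of_add_le_right (by simp) hsum
    _ = r := ENNReal.sub_sub_cancel ENNReal.one_ne_top hr

lemma exists_lt_one_pgf_le_self (μ : Measure ℕ) [IsProbabilityMeasure μ]
    (hm : 1 < ∑' k : ℕ, (k : ℝ≥0∞) * μ {k}) : ∃ r < 1, pgf μ r ≤ r := by
  have hlsc : LowerSemicontinuous fun r => ∑' k : ℕ, (k : ℝ≥0∞) * μ {k} * r ^ k :=
    lowerSemicontinuous_tsum fun k => Continuous.lowerSemicontinuous <|
      (ENNReal.continuous_const_mul (by finiteness)).comp (ENNReal.continuous_pow k)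
  have hnear : ∀ᶠ r in 𝓝[<] 1, 1 < ∑' k : ℕ, (k : ℝ≥0∞) * μ {k} * r ^ k :=
    nhdsWithin_le_nhds (hlsc 1 1 (by simpa using hm))
  obtain ⟨r, hr, hr1⟩ := (hnear.and self_mem_nhdsWithin).exists
  exact ⟨r, hr1, pgf_le_self_of_one_le_tsum μ hr1.le hr.le⟩

noncomputable def pathWeight (μ0 : Measure ℕ) (p : ℕ → ℕ → ℝ≥0∞) {n : ℕ} (a : Fin (n + 1) → ℕ) :
    ℝ≥0∞ :=
  μ0 {a 0} * ∏ k : Fin n, p (a k.castSucc) (a k.succ)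

section pathWeight

variable (μ0 : Measure ℕ) (p : ℕ → ℕ → ℝ≥0∞)

lemma pathWeight_snoc {n : ℕ} (a : Fin (n + 1) → ℕ) (j : ℕ) :
    pathWeight μ0 p (Fin.snoc a j : Fin (n + 2) → ℕ) =
      pathWeight μ0 p a * p (a (Fin.last n)) j := by
  simp only [pathWeight, Fin.prod_univ_castSucc, Fin.succ_castSucc, Fin.succ_last,
    Fin.snoc_castSucc, Fin.snoc_last, ← Fin.castSucc_zero, mul_assoc]

lemma tsum_pathWeight_mul_last (n : ℕ) (h : ℕ → ℝ≥0∞) :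
    ∑' a : Fin (n + 2) → ℕ, pathWeight μ0 p a * h (a (Fin.last _)) =
      ∑' a : Fin (n + 1) → ℕ, pathWeight μ0 p a * ∑' j, p (a (Fin.last n)) j * h j := by
  rw [← (Fin.snocEquiv fun _ => ℕ).tsum_eq, ENNReal.tsum_prod', ENNReal.tsum_comm]
  refine tsum_congr fun a => ?_
  simp [Fin.snocEquiv, pathWeight_snoc, ← ENNReal.tsum_mul_left, mul_assoc]

lemma pathWeight_eq_zero_of_absorbed (h0 : ∀ j ≠ 0, p 0 j = 0) {n : ℕ} {a : Fin (n + 1) → ℕ}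
    {k : Fin (n + 1)} (hk : a k = 0) (hn : a (Fin.last n) ≠ 0) : pathWeight μ0 p a = 0 := by
  by_contra hw
  have hstep : ∀ i : Fin n, p (a i.castSucc) (a i.succ) ≠ 0 := fun i =>
    (Finset.prod_ne_zero_iff.mp (right_ne_zero_of_mul hw)) i (Finset.mem_univ i)
  have habs : ∀ i : Fin (n + 1), k ≤ i → a i = 0 := by
    intro i
    induction i using Fin.induction with
    | zero => intro hki; rwa [← nonpos_iff_eq_zero.mp hki]
    | succ i ih =>
      intro hki
      rcases hki.eq_or_lt with rfl | hlt
      · exact hk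
      · by_contra hne
        exact hstep i (by rw [ih (Fin.le_castSucc_iff.mpr hlt)]; exact h0 _ hne)
  exact hn (habs _ (Fin.le_last k))

end pathWeight

lemma tsum_pathWeight_gwStep_mul_pow (μ0 ν : Measure ℕ) [SFinite ν] (n : ℕ) (s : ℝ≥0∞) :
    ∑' a : Fin (n + 1) → ℕ, pathWeight μ0 (gwStep ν) a * s ^ a (Fin.last n) =
      pgf μ0 ((pgf ν)^[n] s) := by
  induction n generalizing s with
  | zero =>
    rw [← (Equiv.funUnique (Fin 1) ℕ).symm.tsum_eq]
    simp [pathWeight, pgf]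
  | succ n ih =>
    simp only [tsum_pathWeight_mul_last, tsum_gwStep_mul_pow, ih, Function.iterate_succ_apply]

namespace IsGW

variable {Ω : Type*} [MeasurableSpace Ω] {P : Measure Ω} {Y : ℕ → Ω → ℕ} {ν μ0 : Measure ℕ}

lemma measure_cylinder (hY : IsGW P Y ν μ0) (n : ℕ) (a : ℕ → ℕ) :
    P {ω | ∀ k : Fin (n + 1), Y k ω = a k} =
      pathWeight μ0 (gwStep ν) fun k : Fin (n + 1) => a k := by
  have hcyl : {ω | ∀ k : Fin (n + 1), Y k ω = a k} = {ω | ∀ k ≤ n, Y k ω = a k} := by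
    ext ω
    exact ⟨fun h k hk => h ⟨k, Nat.lt_succ_of_le hk⟩, fun h k => h k (Nat.le_of_lt_succ k.isLt)⟩
  rw [hcyl, hY.2, pathWeight, ← Fin.prod_univ_eq_prod_range]
  simp

lemma measure_exists_le_eq_zero_le [SFinite ν] (hY : IsGW P Y ν μ0) (n : ℕ) :
    P {ω | ∃ k ≤ n, Y k ω = 0} ≤ pgf μ0 ((pgf ν)^[n] 0) := by
  let cyl (a : Fin (n + 1) → ℕ) := {ω | ∀ k : Fin (n + 1), Y k ω = a k}
  have hcover : {ω | ∃ k ≤ n, Y k ω = 0} ⊆ ⋃ a, cyl a ∩ {ω | ∃ k ≤ n, Y k ω = 0} :=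
    fun ω hω => Set.mem_iUnion.mpr ⟨fun k => Y k ω, fun _ => rfl, hω⟩
  rw [← tsum_pathWeight_gwStep_mul_pow]
  refine (measure_mono hcover).trans
    ((measure_iUnion_le _).trans (ENNReal.tsum_le_tsum fun a => ?_))
  rcases (cyl a ∩ {ω | ∃ k ≤ n, Y k ω = 0}).eq_empty_or_nonempty with h | ⟨ω, hωa, k, hk, hYk⟩
  · rw [h, measure_empty]; exact zero_le
  · have hak : a ⟨k, Nat.lt_succ_of_le hk⟩ = 0 := (hωa _).symm.trans hYk
    have hlast :
        pathWeight μ0 (gwStep ν) a * 0 ^ a (Fin.last n) = pathWeight μ0 (gwStep ν) a := by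
      rcases eq_or_ne (a (Fin.last n)) 0 with h | h
      · rw [h, pow_zero, mul_one]
      · rw [pathWeight_eq_zero_of_absorbed μ0 _ (fun j hj => by simp [gwStep, hj]) hak h, zero_mul]
    have hpath : a = fun k : Fin (n + 1) => Y k ω := (funext hωa).symm
    rw [hlast, hpath, ← hY.measure_cylinder n fun j => Y j ω]
    exact measure_mono Set.inter_subset_left

lemma measure_exists_eq_zero_le [SFinite ν] (hY : IsGW P Y ν μ0) {r : ℝ≥0∞}
    (hr : pgf ν r ≤ r) : P {ω | ∃ t, Y t ω = 0} ≤ pgf μ0 r := by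
  have hmaps : Set.MapsTo (pgf ν) (Set.Iic r) (Set.Iic r) := fun _ hs => (pgf_mono ν hs).trans hr
  have hunion : {ω | ∃ t, Y t ω = 0} = ⋃ t, {ω | Y t ω = 0} := by ext; simp
  have hacc : ∀ n, Set.accumulate (fun t => {ω | Y t ω = 0}) n = {ω | ∃ k ≤ n, Y k ω = 0} := by
    intro n; ext; simp [Set.mem_accumulate]
  rw [hunion, measure_iUnion_eq_iSup_accumulate]
  refine iSup_le fun n => ?_
  rw [hacc]
  exact (hY.measure_exists_le_eq_zero_le n).trans
    (pgf_mono μ0 (hmaps.iterate n (Set.mem_Iic.mpr zero_le)))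

end IsGW

/-- If the fertility `m` exceeds `1`, the Galton–Watson process started from one
individual survives with positive probability. -/
theorem gw_supercritical_survival {Ω : Type*} [MeasurableSpace Ω]
    (P : Measure Ω) [IsProbabilityMeasure P]
    (ν : Measure ℕ) [IsProbabilityMeasure ν]
    (Y : ℕ → Ω → ℕ) (hY : IsGW P Y ν (Measure.dirac 1))
    (hm : 1 < ∑' k : ℕ, (k : ℝ≥0∞) * ν {k}) :
    0 < P {ω | ∀ t : ℕ, Y t ω ≠ 0} := by
  obtain ⟨r, hr1, hfr⟩ := exists_lt_one_pgf_le_self ν hm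
  have hextinct := hY.measure_exists_eq_zero_le hfr
  rw [pgf_dirac, pow_one] at hextinct
  have hcompl : {ω | ∀ t : ℕ, Y t ω ≠ 0}ᶜ = {ω | ∃ t, Y t ω = 0} := by ext; simp
  refine pos_iff_ne_zero.mpr fun h0 => hr1.not_ge ?_
  calc 1 = P Set.univ := measure_univ.symm
    _ ≤ P {ω | ∀ t : ℕ, Y t ω ≠ 0} + P {ω | ∀ t : ℕ, Y t ω ≠ 0}ᶜ := measure_univ_le_add_compl _
    _ ≤ r := by rw [h0, zero_add, hcompl]; exact hextinct
end

section
/- Let (Y_n) and (Y^p_n) be as in the thinning coupling, started from the same initial state N. Then for any T, M ≥ 1, P(Y^p_T ≥ 2N) ≥ p^{TM} · P(max_{0 ≤ i ≤ T} Y_i ≤ M and Y_T ≥ 2N). -/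
open MeasureTheory ProbabilityTheory Filter
open scoped ENNReal

/-- The Bernoulli measure with parameter `p` on `ℕ`. -/
noncomputable def bern (p : ℝ) : Measure ℕ :=
  ENNReal.ofReal (1 - p) • Measure.dirac 0 + ENNReal.ofReal p • Measure.dirac 1

/-! On the event `A` that the generations `Y 0, …, Y T` are at most `M` and `Y T ≥ 2 N`, and the
event `E` that every mark `B n i` with `n < T`, `i < M` equals `1`, the thinned process `Yp`
coincides with `Y` up to time `T`. The event `A` lies in the σ-algebra of the offspring numbers
and `E` in that of the marks, so they are independent, and `P E = p ^ (T M)`. -/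

lemma bern_singleton_one (p : ℝ) : bern p {1} = ENNReal.ofReal p := by
  simp [bern]

lemma measurable_sum_range_of_measurable_index {Ω β : Type*} {mΩ : MeasurableSpace Ω}
    [AddCommMonoid β] [MeasurableSpace β] [MeasurableAdd₂ β] {g : Ω → ℕ} {f : ℕ → Ω → β}
    (hg : Measurable g) (hf : ∀ i, Measurable (f i)) :
    Measurable fun ω => ∑ i ∈ Finset.range (g ω), f i ω := by
  have hsum : Measurable fun q : Ω × ℕ => ∑ i ∈ Finset.range q.2, f i q.1 :=
    measurable_from_prod_countable_left fun m =>
      Finset.measurable_sum (Finset.range m) fun i _ => hf i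
  exact hsum.comp (measurable_id.prodMk hg)

lemma measurable_of_eq_sum_range_rec {Ω : Type*} {mΩ : MeasurableSpace Ω}
    {X : ℕ → ℕ → Ω → ℕ} {Y : ℕ → Ω → ℕ} (hX : ∀ n i, Measurable (X n i))
    (hY0 : Measurable (Y 0)) (hrec : ∀ n ω, Y (n + 1) ω = ∑ i ∈ Finset.range (Y n ω), X n i ω) :
    ∀ n, Measurable (Y n)
  | 0 => hY0
  | n + 1 => by
    rw [funext (hrec n)]
    exact measurable_sum_range_of_measurable_index
      (measurable_of_eq_sum_range_rec hX hY0 hrec n) (hX n)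

lemma iIndepFun.indep_iSup_comap_sumElim {Ω ι κ β : Type*} {mΩ : MeasurableSpace Ω}
    [mβ : MeasurableSpace β] {P : Measure Ω} {f : ι → Ω → β} {g : κ → Ω → β}
    (hf : ∀ i, Measurable (f i)) (hg : ∀ j, Measurable (g j))
    (h : iIndepFun (Sum.elim f g) P) :
    Indep (⨆ i, mβ.comap (f i)) (⨆ j, mβ.comap (g j)) P := by
  have hle : ∀ k, mβ.comap (Sum.elim f g k) ≤ mΩ := by
    rintro (i | j)
    exacts [(hf i).comap_le, (hg j).comap_le]
  have := indep_iSup_of_disjoint hle h.iIndep Set.isCompl_range_inl_range_inr.disjoint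
  simpa only [iSup_range, Sum.elim_inl, Sum.elim_inr] using this

lemma iIndepFun.measure_biInter_preimage_one_eq_pow {Ω ι : Type*} {mΩ : MeasurableSpace Ω}
    {P : Measure Ω} {p : ℝ} {g : ι → Ω → ℕ} (hg : ∀ i, Measurable (g i))
    (hlaw : ∀ i, Measure.map (g i) P = bern p) (hindep : iIndepFun g P) (S : Finset ι) :
    P (⋂ i ∈ S, g i ⁻¹' {1}) = ENNReal.ofReal p ^ S.card := by
  have hone : ∀ i, P (g i ⁻¹' {1}) = ENNReal.ofReal p := fun i => by
    rw [← Measure.map_apply (hg i) (measurableSet_singleton 1), hlaw, bern_singleton_one]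
  rw [hindep.measure_inter_preimage_eq_mul S (fun _ _ => measurableSet_singleton 1)]
  simp only [hone, Finset.prod_const]

lemma thinned_eq_of_marks_eq_one {x b : ℕ → ℕ → ℕ} {y yp : ℕ → ℕ} {T M : ℕ}
    (h0 : yp 0 = y 0) (hy : ∀ n, y (n + 1) = ∑ i ∈ Finset.range (y n), x n i)
    (hyp : ∀ n, yp (n + 1) = ∑ i ∈ Finset.range (yp n), b n i * x n i)
    (hyM : ∀ n < T, y n ≤ M) (hb : ∀ n < T, ∀ i < M, b n i = 1) :
    ∀ n ≤ T, yp n = y n := by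
  intro n hn
  induction n with
  | zero => exact h0
  | succ n ih =>
    rw [hy, hyp, ih (Nat.le_of_succ_le hn)]
    refine Finset.sum_congr rfl fun i hi => ?_
    rw [hb n hn i ((Finset.mem_range.1 hi).trans_le (hyM n hn)), one_mul]

theorem gw_thinning_coupling_general {Ω : Type*} [MeasurableSpace Ω]
    (P : Measure Ω) (p : ℝ) (hp0 : 0 ≤ p)
    (X B : ℕ → ℕ → Ω → ℕ)
    (hmX : ∀ n i, Measurable (X n i)) (hmB : ∀ n i, Measurable (B n i))
    (hlawB : ∀ n i, Measure.map (B n i) P = bern p)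
    (hindep : iIndepFun
      (Sum.elim (fun q : ℕ × ℕ => X q.1 q.2) (fun q : ℕ × ℕ => B q.1 q.2)) P)
    (N : ℕ) (Y Yp : ℕ → Ω → ℕ)
    (hY0 : ∀ ω, Y 0 ω = N) (hYp0 : ∀ ω, Yp 0 ω = N)
    (hYrec : ∀ n ω, Y (n + 1) ω = ∑ i ∈ Finset.range (Y n ω), X n i ω)
    (hYprec : ∀ n ω, Yp (n + 1) ω = ∑ i ∈ Finset.range (Yp n ω), B n i ω * X n i ω)
    (T M : ℕ) :
    ENNReal.ofReal (p ^ (T * M)) * P {ω | (∀ i ≤ T, Y i ω ≤ M) ∧ 2 * N ≤ Y T ω} ≤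
      P {ω | 2 * N ≤ Yp T ω} := by
  set mX : MeasurableSpace Ω := ⨆ q : ℕ × ℕ, MeasurableSpace.comap (X q.1 q.2) inferInstance
  set mB : MeasurableSpace Ω := ⨆ q : ℕ × ℕ, MeasurableSpace.comap (B q.1 q.2) inferInstance
  set A := {ω | (∀ i ≤ T, Y i ω ≤ M) ∧ 2 * N ≤ Y T ω}
  set E := ⋂ q ∈ Finset.range T ×ˢ Finset.range M, B q.1 q.2 ⁻¹' {1}
  have hY : ∀ n, Measurable[mX] (Y n) :=
    measurable_of_eq_sum_range_rec
      (fun n i => (comap_measurable _).mono (le_iSup_of_le (n, i) le_rfl) le_rfl)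
      (by simpa only [funext hY0] using measurable_const) hYrec
  have hA : MeasurableSet[mX] A := by
    simp only [A, Set.ofPred_and, Set.ofPred_forall]
    exact (MeasurableSet.iInter fun i => .iInter fun _ => hY i measurableSet_Iic).inter
      (hY T measurableSet_Ici)
  have hE : MeasurableSet[mB] E :=
    .biInter (Finset.countable_toSet _) fun q _ =>
      (comap_measurable _).mono (le_iSup_of_le q le_rfl) le_rfl (measurableSet_singleton 1)
  have hPE : P E = ENNReal.ofReal (p ^ (T * M)) := by
    refine (iIndepFun.measure_biInter_preimage_one_eq_pow (fun q : ℕ × ℕ => hmB q.1 q.2)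
      (fun q => hlawB q.1 q.2) (hindep.precomp Sum.inr_injective) _).trans ?_
    rw [Finset.card_product, Finset.card_range, Finset.card_range, ENNReal.ofReal_pow hp0]
  have hsub : A ∩ E ⊆ {ω | 2 * N ≤ Yp T ω} := by
    rintro ω ⟨⟨hYM, hNT⟩, hωE⟩
    have hmarks : ∀ n < T, ∀ i < M, B n i ω = 1 := fun n hn i hi => by
      simpa using Set.mem_iInter₂.1 hωE (n, i) (by simp [hn, hi])
    have hcoupled := thinned_eq_of_marks_eq_one (y := (Y · ω)) (yp := (Yp · ω))
      (by rw [hYp0, hY0]) (hYrec · ω) (hYprec · ω) (fun n hn => hYM n hn.le) hmarks T le_rfl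
    simpa only [Set.mem_ofPred, hcoupled] using hNT
  have hXB : Indep mX mB P :=
    iIndepFun.indep_iSup_comap_sumElim (fun q => hmX q.1 q.2) (fun q => hmB q.1 q.2) hindep
  calc ENNReal.ofReal (p ^ (T * M)) * P A = P (A ∩ E) := by
        rw [(Indep_iff mX mB P).1 hXB A E hA hE, hPE, mul_comm]
    _ ≤ P {ω | 2 * N ≤ Yp T ω} := measure_mono hsub

/-- Coupling inequality between a Galton–Watson process and its `p`-thinning:
`P(Yp T ≥ 2 N) ≥ p ^ (T * M) * P(max_{i ≤ T} Y i ≤ M and Y T ≥ 2 N)`. -/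
theorem gw_thinning_coupling {Ω : Type*} [MeasurableSpace Ω]
    (P : Measure Ω) [IsProbabilityMeasure P]
    (ν : Measure ℕ) [IsProbabilityMeasure ν] (p : ℝ) (hp0 : 0 ≤ p) (hp1 : p ≤ 1)
    (X B : ℕ → ℕ → Ω → ℕ)
    (hmX : ∀ n i, Measurable (X n i)) (hmB : ∀ n i, Measurable (B n i))
    (hlawX : ∀ n i, Measure.map (X n i) P = ν)
    (hlawB : ∀ n i, Measure.map (B n i) P = bern p)
    (hindep : iIndepFun
      (Sum.elim (fun q : ℕ × ℕ => X q.1 q.2) (fun q : ℕ × ℕ => B q.1 q.2)) P)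
    (N : ℕ) (Y Yp : ℕ → Ω → ℕ)
    (hY0 : ∀ ω, Y 0 ω = N) (hYp0 : ∀ ω, Yp 0 ω = N)
    (hYrec : ∀ n ω, Y (n + 1) ω = ∑ i ∈ Finset.range (Y n ω), X n i ω)
    (hYprec : ∀ n ω, Yp (n + 1) ω = ∑ i ∈ Finset.range (Yp n ω), B n i ω * X n i ω)
    (T M : ℕ) (hT : 1 ≤ T) (hM : 1 ≤ M) :
    ENNReal.ofReal (p ^ (T * M)) * P {ω | (∀ i ≤ T, Y i ω ≤ M) ∧ 2 * N ≤ Y T ω} ≤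
      P {ω | 2 * N ≤ Yp T ω} :=
  gw_thinning_coupling_general P p hp0 X B hmX hmB hlawB hindep N Y Yp hY0 hYp0 hYrec hYprec T M
end
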